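/- Let G be a polynomial of degree at most 2 on R^2 and let X be a standard normal random vector in R^2. Then sup_{x ∈ R^2} [|G(x)| e^{−|x|²/4}] ≤ 6√2 · (E[|G(X)|²])^{1/2}. -/

import Mathlib

/-!
The moment generating function of a standard Gaussian is `e^{t²/2}`; since its derivative is
`t e^{t²/2}`, Leibniz's rule gives the moment recursion `E[Y^{n+2}] = (n+1) E[Y^n]`. Writing
`G = A(x₁) + B(x₁) x₂ + a₂₂ x₂²` and integrating first in `x₂`, then in `x₁`, this yields
`E[G(X)²] = s² + 2a₁₁² + 4a₁₂² + 2a₂₂² + b₁² + b₂²` with `s = a₁₁ + a₂₂ + c`: Parseval for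
`G = s + b₁x₁ + b₂x₂ + a₁₁(x₁² - 1) + 2a₁₂x₁x₂ + a₂₂(x₂² - 1)` in orthogonal Hermite polynomials.
Cauchy–Schwarz against the same expansion bounds `G(x)²` by `E[G(X)²] (|x|⁴/2 + 2)`, and
`|x|⁴/2 + 2 ≤ 4 e^{|x|²/2}`; hence even `|G(x)| e^{-|x|²/4} ≤ 2 (E[G(X)²])^{1/2}`.
-/

open MeasureTheory ProbabilityTheory Real

lemma deriv_exp_sq_div_two :
    deriv (fun t : ℝ ↦ rexp (t ^ 2 / 2)) = fun t ↦ t * rexp (t ^ 2 / 2) := by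
  ext t
  convert (((hasDerivAt_pow 2 t).div_const 2).exp).deriv using 1
  push_cast
  ring

lemma iteratedDeriv_exp_sq_div_two_add_two (n : ℕ) :
    iteratedDeriv (n + 2) (fun t ↦ rexp (t ^ 2 / 2)) 0
      = (n + 1) * iteratedDeriv n (fun t ↦ rexp (t ^ 2 / 2)) 0 := by
  rw [iteratedDeriv_succ', deriv_exp_sq_div_two,
    iteratedDeriv_fun_mul (by fun_prop) (by fun_prop), Finset.sum_eq_single 1]
  · simp [iteratedDeriv_fun_id_zero]
  · intro i _ hi
    simp [iteratedDeriv_fun_id_zero, hi]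
  · simp

lemma integral_pow_gaussianReal_eq_iteratedDeriv (n : ℕ) :
    ∫ x, x ^ n ∂gaussianReal 0 1 = iteratedDeriv n (fun t ↦ rexp (t ^ 2 / 2)) 0 := by
  have h := iteratedDeriv_mgf_zero (X := id) (μ := gaussianReal 0 1) (by simp) n
  rw [mgf_id_gaussianReal] at h
  simpa using h.symm

lemma integral_pow_add_two_gaussianReal (n : ℕ) :
    ∫ x, x ^ (n + 2) ∂gaussianReal 0 1 = (n + 1) * ∫ x, x ^ n ∂gaussianReal 0 1 := by
  simp only [integral_pow_gaussianReal_eq_iteratedDeriv, iteratedDeriv_exp_sq_div_two_add_two]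

lemma integrable_pow_gaussianReal (μ : ℝ) (v : NNReal) (n : ℕ) :
    Integrable (fun x : ℝ ↦ x ^ n) (gaussianReal μ v) :=
  integrable_pow_of_mem_interior_integrableExpSet (X := id) (by simp) n

lemma sq_quadratic_eq_sum (p q r y : ℝ) :
    (p + q * y + r * y ^ 2) ^ 2
      = ∑ k : Fin 5, ![p ^ 2, 2 * p * q, q ^ 2 + 2 * p * r, 2 * q * r, r ^ 2] k * y ^ (k : ℕ) := by
  rw [Fin.sum_univ_five]
  dsimp
  ring

lemma integrable_sq_quadratic_gaussianReal (μ : ℝ) (v : NNReal) (p q r : ℝ) :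
    Integrable (fun y ↦ (p + q * y + r * y ^ 2) ^ 2) (gaussianReal μ v) := by
  simp_rw [sq_quadratic_eq_sum]
  exact integrable_finsetSum _ fun k _ ↦ (integrable_pow_gaussianReal μ v k).const_mul _

lemma integral_sq_quadratic_gaussianReal (p q r : ℝ) :
    ∫ y, (p + q * y + r * y ^ 2) ^ 2 ∂gaussianReal 0 1 = (p + r) ^ 2 + q ^ 2 + 2 * r ^ 2 := by
  have m0 : ∫ x, x ^ 0 ∂gaussianReal 0 1 = 1 := by simp
  have m1 : ∫ x, x ^ 1 ∂gaussianReal 0 1 = 0 := by simp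
  have m2 : ∫ x, x ^ 2 ∂gaussianReal 0 1 = 1 := by
    simpa [m0] using integral_pow_add_two_gaussianReal 0
  have m3 : ∫ x, x ^ 3 ∂gaussianReal 0 1 = 0 := by
    simpa [m1] using integral_pow_add_two_gaussianReal 1
  have m4 : ∫ x, x ^ 4 ∂gaussianReal 0 1 = 3 := by
    rw [integral_pow_add_two_gaussianReal 2, m2]
    norm_num
  simp_rw [sq_quadratic_eq_sum]
  rw [integral_finsetSum _ fun (k : Fin 5) _ ↦ (integrable_pow_gaussianReal 0 1 k).const_mul _]
  simp only [integral_const_mul, Fin.sum_univ_five]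
  dsimp
  rw [m0, m1, m2, m3, m4]
  ring

lemma integral_sq_quadratic_gaussianReal_prod (a b c d e f : ℝ) :
    ∫ z : ℝ × ℝ, (a * z.1 ^ 2 + 2 * b * z.1 * z.2 + c * z.2 ^ 2 + d * z.1 + e * z.2 + f) ^ 2
        ∂(gaussianReal 0 1).prod (gaussianReal 0 1)
      = (a + c + f) ^ 2 + 2 * a ^ 2 + 4 * b ^ 2 + 2 * c ^ 2 + d ^ 2 + e ^ 2 := by
  have hsplit : ∀ x y : ℝ, a * x ^ 2 + 2 * b * x * y + c * y ^ 2 + d * x + e * y + f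
      = (f + d * x + a * x ^ 2) + (e + 2 * b * x) * y + c * y ^ 2 := fun x y ↦ by ring
  have hinner : ∀ x : ℝ,
      ∫ y, (a * x ^ 2 + 2 * b * x * y + c * y ^ 2 + d * x + e * y + f) ^ 2 ∂gaussianReal 0 1
        = ((f + c) + d * x + a * x ^ 2) ^ 2 + (e + 2 * b * x + 0 * x ^ 2) ^ 2 + 2 * c ^ 2 := by
    intro x
    simp_rw [hsplit x, integral_sq_quadratic_gaussianReal]
    ring
  have hA := integrable_sq_quadratic_gaussianReal 0 1 (f + c) d a
  have hB := integrable_sq_quadratic_gaussianReal 0 1 e (2 * b) 0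
  have hint : Integrable (fun z : ℝ × ℝ ↦
      (a * z.1 ^ 2 + 2 * b * z.1 * z.2 + c * z.2 ^ 2 + d * z.1 + e * z.2 + f) ^ 2)
      ((gaussianReal 0 1).prod (gaussianReal 0 1)) := by
    refine (integrable_prod_iff (by fun_prop)).2 ⟨.of_forall fun x ↦ ?_, ?_⟩
    · simp_rw [hsplit x]
      exact integrable_sq_quadratic_gaussianReal 0 1 _ _ _
    · simp_rw [norm_pow, Real.norm_eq_abs, sq_abs, hinner]
      exact (hA.fun_add hB).fun_add (integrable_const _)
  rw [integral_prod _ hint]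
  simp_rw [hinner]
  rw [integral_add (hA.fun_add hB) (integrable_const _), integral_add hA hB]
  simp only [integral_sq_quadratic_gaussianReal, integral_const, probReal_univ, one_smul]
  ring

lemma sq_quadratic_le (a b c d e f x y : ℝ) :
    (a * x ^ 2 + 2 * b * x * y + c * y ^ 2 + d * x + e * y + f) ^ 2
      ≤ ((a + c + f) ^ 2 + 2 * a ^ 2 + 4 * b ^ 2 + 2 * c ^ 2 + d ^ 2 + e ^ 2)
        * ((x ^ 2 + y ^ 2) ^ 2 / 2 + 2) := by
  have h := Finset.sum_mul_sq_le_sq_mul_sq Finset.univ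
    ![a + c + f, a, a, c, c, 2 * b, d, e]
    ![1, (x ^ 2 - 1) / 2, (x ^ 2 - 1) / 2, (y ^ 2 - 1) / 2, (y ^ 2 - 1) / 2, x * y, x, y]
  simp only [Fin.sum_univ_eight] at h
  dsimp at h
  linarith

lemma sq_div_two_add_two_le_four_mul_exp {t : ℝ} (ht : 0 ≤ t) :
    t ^ 2 / 2 + 2 ≤ 4 * rexp (t / 2) := by
  nlinarith [quadratic_le_exp_of_nonneg (x := t / 2) (by positivity)]

lemma abs_quadratic_mul_exp_le (a b c d e f x y : ℝ) :
    |a * x ^ 2 + 2 * b * x * y + c * y ^ 2 + d * x + e * y + f| * rexp (-(x ^ 2 + y ^ 2) / 4)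
      ≤ 2 * √((a + c + f) ^ 2 + 2 * a ^ 2 + 4 * b ^ 2 + 2 * c ^ 2 + d ^ 2 + e ^ 2) := by
  set G := a * x ^ 2 + 2 * b * x * y + c * y ^ 2 + d * x + e * y + f
  set S := (a + c + f) ^ 2 + 2 * a ^ 2 + 4 * b ^ 2 + 2 * c ^ 2 + d ^ 2 + e ^ 2
  set r := x ^ 2 + y ^ 2
  have hS : 0 ≤ S := by positivity
  have hexp : rexp (-r / 4) ^ 2 * rexp (r / 2) = 1 := by
    rw [← exp_nat_mul, ← exp_add]
    simp only [exp_eq_one_iff]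
    push_cast
    ring
  have hsq : (|G| * rexp (-r / 4)) ^ 2 ≤ 4 * S :=
    calc (|G| * rexp (-r / 4)) ^ 2 = G ^ 2 * rexp (-r / 4) ^ 2 := by rw [mul_pow, sq_abs]
      _ ≤ S * (r ^ 2 / 2 + 2) * rexp (-r / 4) ^ 2 := by gcongr; exact sq_quadratic_le ..
      _ ≤ S * (4 * rexp (r / 2)) * rexp (-r / 4) ^ 2 := by
        gcongr; exact sq_div_two_add_two_le_four_mul_exp (by positivity)
      _ = 4 * S := by linear_combination (4 * S) * hexp
  rw [show 2 * √S = √(4 * S) by rw [sqrt_mul' _ hS]; norm_num]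
  exact le_sqrt_of_sq_le hsq

/-- For a second degree polynomial
`G(x) = a₁₁x₁² + 2a₁₂x₁x₂ + a₂₂x₂² + b₁x₁ + b₂x₂ + c` on `ℝ²` and `X`
standard normal in `ℝ²`, `sup_x |G(x)| e^{−|x|²/4} ≤ 6√2 (E[G(X)²])^{1/2}`. -/
theorem sup_quadratic_bound (a₁₁ a₁₂ a₂₂ b₁ b₂ c : ℝ) :
    ∀ x : Fin 2 → ℝ,
      |a₁₁ * x 0 ^ 2 + 2 * a₁₂ * x 0 * x 1 + a₂₂ * x 1 ^ 2
          + b₁ * x 0 + b₂ * x 1 + c| * Real.exp (-(x 0 ^ 2 + x 1 ^ 2) / 4)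
        ≤ 6 * Real.sqrt 2 *
          Real.sqrt (∫ y : Fin 2 → ℝ,
            (a₁₁ * y 0 ^ 2 + 2 * a₁₂ * y 0 * y 1 + a₂₂ * y 1 ^ 2
              + b₁ * y 0 + b₂ * y 1 + c) ^ 2
            ∂(Measure.pi fun _ : Fin 2 => gaussianReal 0 1)) := by
  intro x
  have hpi : ∫ y : Fin 2 → ℝ,
      (a₁₁ * y 0 ^ 2 + 2 * a₁₂ * y 0 * y 1 + a₂₂ * y 1 ^ 2 + b₁ * y 0 + b₂ * y 1 + c) ^ 2
        ∂(Measure.pi fun _ : Fin 2 => gaussianReal 0 1)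
      = ∫ z : ℝ × ℝ,
          (a₁₁ * z.1 ^ 2 + 2 * a₁₂ * z.1 * z.2 + a₂₂ * z.2 ^ 2 + b₁ * z.1 + b₂ * z.2 + c) ^ 2
          ∂(gaussianReal 0 1).prod (gaussianReal 0 1) :=
    (measurePreserving_piFinTwo fun _ ↦ gaussianReal 0 1).integral_comp' (fun z : ℝ × ℝ ↦
      (a₁₁ * z.1 ^ 2 + 2 * a₁₂ * z.1 * z.2 + a₂₂ * z.2 ^ 2 + b₁ * z.1 + b₂ * z.2 + c) ^ 2)
  rw [hpi, integral_sq_quadratic_gaussianReal_prod]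
  refine (abs_quadratic_mul_exp_le a₁₁ a₁₂ a₂₂ b₁ b₂ c (x 0) (x 1)).trans ?_
  gcongr
  nlinarith [one_lt_sqrt_two]
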